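/- arXiv:2402.19090 — 4 statements merged into one kernel-verified Lean document; each statement's English description precedes it below -/
import Mathlib

section
/- For d∈(0,e^{-2}), with f(d)=2/log(1/d), the Kullback–Leibler divergence KL(f(d),d)=f(d)·log(f(d)/d)+(1−f(d))·log((1−f(d))/(1−d)) satisfies KL(f(d),d) ≥ 1/2. -/
/-! With `p = f(d)` we have `p · log (1/d) = 2`, so writing the divergence as cross-entropy minus
entropy, `KL(p, d) ≥ p · log (1/d) - H(p) ≥ 2 - log 2 > 1/2`, where the term `(1 - p) · log (1/(1 - d))`
of the cross-entropy is dropped as nonnegative and the binary entropy `H(p)` is at most `log 2`. -/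

open Real

noncomputable def bernKL (p q : ℝ) : ℝ :=
  p * Real.log (p / q) + (1 - p) * Real.log ((1 - p) / (1 - q))

namespace Real

lemma mul_log_div_eq_sub {x y : ℝ} (hy : y ≠ 0) : x * log (x / y) = x * log y⁻¹ - x * log x⁻¹ := by
  rcases eq_or_ne x 0 with rfl | hx
  · simp
  · rw [log_div hx hy, log_inv, log_inv]
    ring

end Real

lemma bernKL_eq_sub_binEntropy {p q : ℝ} (hq₀ : q ≠ 0) (hq₁ : q ≠ 1) :
    bernKL p q = p * log q⁻¹ + (1 - p) * log (1 - q)⁻¹ - binEntropy p := by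
  rw [bernKL, binEntropy, mul_log_div_eq_sub hq₀, mul_log_div_eq_sub (sub_ne_zero.2 hq₁.symm)]
  ring

lemma mul_log_inv_sub_log_two_le_bernKL {p q : ℝ} (hp : p ≤ 1) (hq₀ : 0 < q) (hq₁ : q < 1) :
    p * log q⁻¹ - log 2 ≤ bernKL p q := by
  have hcross : 0 ≤ (1 - p) * log (1 - q)⁻¹ :=
    mul_nonneg (sub_nonneg.2 hp) (log_nonneg (one_le_inv₀ (sub_pos.2 hq₁) |>.2 (by linarith)))
  rw [bernKL_eq_sub_binEntropy hq₀.ne' hq₁.ne]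
  linarith [binEntropy_le_log_two (p := p)]

theorem KL_f_ge_half (d : ℝ) (hd : d ∈ Set.Ioo 0 (Real.exp (-2))) :
    (1:ℝ) / 2 ≤ bernKL (2 / Real.log (1 / d)) d := by
  obtain ⟨hd₀, hd₂⟩ := hd
  have hd₁ : d < 1 := hd₂.trans (exp_lt_one_iff.2 (by norm_num))
  have hL : 2 < log (1 / d) := by
    rw [one_div, log_inv, lt_neg, ← log_exp (-2)]
    exact log_lt_log hd₀ hd₂
  have hpL : 2 / log (1 / d) * log (1 / d) = 2 := div_mul_cancel₀ 2 (by positivity)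
  have hp : 2 / log (1 / d) ≤ 1 := (div_le_one (by positivity)).2 hL.le
  have hKL := mul_log_inv_sub_log_two_le_bernKL hp hd₀ hd₁
  rw [← one_div, hpL] at hKL
  linarith [log_two_lt_d9]
end

section
/- Let X_1,...,X_N be i.i.d. random variables with values in [0,1] and mean d∈(0,1]. Then P((1/N)∑X_n > f(d)) ≤ exp(−N/3), where f(d)=e²d for d≥e^{-2} and f(d)=2/log(1/d) for d<e^{-2}. -/
open MeasureTheory ProbabilityTheory Real Finset

noncomputable def effConsumption (d : ℝ) : ℝ :=
  if Real.exp (-2) ≤ d then Real.exp 2 * d else 2 / Real.log (1 / d)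

/-!
Convexity of `x ↦ exp (t x)` on `[0, 1]` bounds the moment generating function of a `[0, 1]`-valued
variable of mean `d` by `exp (d (eᵗ - 1))`, so by independence and Markov's inequality
`P(∑ Xₙ ≥ N c) ≤ exp (N (d (eᵗ - 1) - t c))` for every `t ≥ 0`. For `c = f(d)` the choice
`t = 2` (if `d ≥ e⁻²`) or `t = log (1 / d)` (otherwise) makes the exponent at most `-N / 3`.
-/

lemma exp_mul_le_one_add_mul_exp_sub_one {t x : ℝ} (hx : x ∈ Set.Icc (0 : ℝ) 1) :
    exp (t * x) ≤ 1 + x * (exp t - 1) := by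
  have h := convexOn_exp.2 (Set.mem_univ 0) (Set.mem_univ t) (sub_nonneg.2 hx.2) hx.1
    (sub_add_cancel 1 x)
  simp only [smul_eq_mul, mul_zero, zero_add, exp_zero] at h
  rw [mul_comm t x]
  linarith

section Chernoff

variable {Ω : Type*} [MeasurableSpace Ω] {μ : Measure Ω} [IsProbabilityMeasure μ]

lemma mgf_le_exp_integral_mul_exp_sub_one {X : Ω → ℝ} (hX : AEMeasurable X μ)
    (hrange : ∀ᵐ ω ∂μ, X ω ∈ Set.Icc (0 : ℝ) 1) (t : ℝ) :
    mgf X μ t ≤ exp (μ[X] * (exp t - 1)) := by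
  have hXint : Integrable X μ := .of_mem_Icc 0 1 hX hrange
  calc mgf X μ t ≤ ∫ ω, (1 + X ω * (exp t - 1)) ∂μ :=
        integral_mono_ae (integrable_exp_mul_of_mem_Icc hX hrange)
          ((integrable_const 1).add (hXint.mul_const _))
          (hrange.mono fun ω hω => exp_mul_le_one_add_mul_exp_sub_one hω)
    _ = 1 + μ[X] * (exp t - 1) := by
        rw [integral_add (integrable_const 1) (hXint.mul_const _), integral_mul_const]
        simp
    _ ≤ exp (μ[X] * (exp t - 1)) := by linarith [add_one_le_exp (μ[X] * (exp t - 1))]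

lemma measureReal_sum_ge_le_exp_of_mem_Icc {X : ℕ → Ω → ℝ} (hmeas : ∀ n, Measurable (X n))
    (hindep : iIndepFun X μ) (hrange : ∀ n, ∀ᵐ ω ∂μ, X n ω ∈ Set.Icc (0 : ℝ) 1) {d : ℝ}
    (hmean : ∀ n, μ[X n] = d) (N : ℕ) (c : ℝ) {t : ℝ} (ht : 0 ≤ t) :
    μ.real {ω | N * c ≤ ∑ n ∈ range N, X n ω} ≤ exp (N * (d * (exp t - 1) - t * c)) := by
  have hmgf : mgf (∑ n ∈ range N, X n) μ t ≤ exp (d * (exp t - 1)) ^ N := by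
    rw [hindep.mgf_sum hmeas]
    refine (prod_le_prod (fun n _ => mgf_nonneg) fun n _ => ?_).trans_eq
      (by rw [prod_const, card_range])
    simpa [hmean n] using mgf_le_exp_integral_mul_exp_sub_one (hmeas n).aemeasurable (hrange n) t
  have hint := hindep.integrable_exp_mul_sum hmeas (s := range N) fun n _ =>
    integrable_exp_mul_of_mem_Icc (t := t) (hmeas n).aemeasurable (hrange n)
  calc μ.real {ω | N * c ≤ ∑ n ∈ range N, X n ω}
      ≤ exp (-t * (N * c)) * mgf (∑ n ∈ range N, X n) μ t := by
        simpa only [Finset.sum_apply] using measure_ge_le_exp_mul_mgf (N * c) ht hint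
    _ ≤ exp (-t * (N * c)) * exp (d * (exp t - 1)) ^ N := by gcongr
    _ = exp (N * (d * (exp t - 1) - t * c)) := by
        rw [← exp_nat_mul, ← exp_add]; ring_nf

end Chernoff

lemma effConsumption_nonneg {d : ℝ} (hd : 0 < d) : 0 ≤ effConsumption d := by
  unfold effConsumption
  split_ifs with h
  · positivity
  · refine div_nonneg zero_le_two (log_nonneg ?_)
    rw [one_div, one_le_inv₀ hd]
    linarith [exp_lt_one_iff.2 (by norm_num : (-2 : ℝ) < 0), not_le.1 h]

lemma exists_chernoff_exponent_effConsumption {d : ℝ} (hd : 0 < d) :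
    ∃ t, 0 ≤ t ∧ d * (exp t - 1) - t * effConsumption d ≤ -(1 / 3) := by
  unfold effConsumption
  split_ifs with h
  · refine ⟨2, zero_le_two, ?_⟩
    have : exp (-2) * exp 2 = 1 := by rw [← exp_add]; norm_num
    nlinarith [exp_pos 2, exp_pos (-2)]
  · push Not at h
    have hlog : 2 < log (1 / d) := by
      rw [lt_log_iff_exp_lt (by positivity), one_div, lt_inv_comm₀ (exp_pos 2) hd, ← exp_neg]
      exact h
    refine ⟨log (1 / d), by linarith, ?_⟩
    rw [exp_log (by positivity), mul_div_cancel₀ _ (by positivity : log (1 / d) ≠ 0)]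
    field_simp
    linarith

lemma natCast_mul_le_of_lt_one_div_mul {c s : ℝ} (hc : 0 ≤ c) {N : ℕ} (h : c < 1 / N * s) :
    N * c ≤ s := by
  rcases N.eq_zero_or_pos with rfl | hN
  · linarith [show c < 0 by simpa using h]
  · rw [one_div_mul_eq_div, lt_div_iff₀ (by positivity)] at h
    linarith

theorem consumption_bound_general
    {Ω : Type*} [MeasureSpace Ω] [IsProbabilityMeasure (ℙ : Measure Ω)]
    (X : ℕ → Ω → ℝ) (hmeas : ∀ n, Measurable (X n))
    (hindep : iIndepFun X ℙ)
    (hrange : ∀ n ω, X n ω ∈ Set.Icc (0:ℝ) 1)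
    (d : ℝ) (hd : d ∈ Set.Ioc (0:ℝ) 1)
    (hmean : ∀ n, ∫ ω, X n ω ∂ℙ = d)
    (N : ℕ) :
    ℙ {ω | effConsumption d < (1 / (N:ℝ)) * ∑ n ∈ Finset.range N, X n ω}
      ≤ ENNReal.ofReal (Real.exp (-(N:ℝ) / 3)) := by
  obtain ⟨t, ht, hexponent⟩ := exists_chernoff_exponent_effConsumption hd.1
  calc ℙ {ω | effConsumption d < (1 / (N:ℝ)) * ∑ n ∈ Finset.range N, X n ω}
      ≤ ℙ {ω | N * effConsumption d ≤ ∑ n ∈ range N, X n ω} :=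
        measure_mono fun ω => natCast_mul_le_of_lt_one_div_mul (effConsumption_nonneg hd.1)
    _ = ENNReal.ofReal ((ℙ : Measure Ω).real {ω | N * effConsumption d ≤ ∑ n ∈ range N, X n ω}) :=
        (ofReal_measureReal).symm
    _ ≤ ENNReal.ofReal (exp (-(N:ℝ) / 3)) := by
        refine ENNReal.ofReal_le_ofReal ((measureReal_sum_ge_le_exp_of_mem_Icc hmeas hindep
          (fun n => ae_of_all _ (hrange n)) hmean N _ ht).trans (exp_le_exp.2 ?_))
        nlinarith [N.cast_nonneg (α := ℝ)]

theorem consumption_bound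
    {Ω : Type*} [MeasureSpace Ω] [IsProbabilityMeasure (ℙ : Measure Ω)]
    (X : ℕ → Ω → ℝ) (hmeas : ∀ n, Measurable (X n))
    (hindep : iIndepFun X ℙ)
    (hident : ∀ n, IdentDistrib (X n) (X 0) ℙ ℙ)
    (hrange : ∀ n ω, X n ω ∈ Set.Icc (0:ℝ) 1)
    (d : ℝ) (hd : d ∈ Set.Ioc (0:ℝ) 1)
    (hmean : ∀ n, ∫ ω, X n ω ∂ℙ = d)
    (N : ℕ) (hN : 1 ≤ N) :
    ℙ {ω | effConsumption d < (1 / (N:ℝ)) * ∑ n ∈ Finset.range N, X n ω}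
      ≤ ENNReal.ofReal (Real.exp (-(N:ℝ) / 3)) :=
  consumption_bound_general X hmeas hindep hrange d hd hmean N
end

section
/- Fix K ≥ 2, gaps 0 < Δ_2 ≤ … ≤ Δ_K, and nonincreasing positive reals d_{(1)} ≥ … ≥ d_{(K)}. Then H₁ := d_{(1)}/Δ_2² + ∑_{k=2}^K d_{(k)}/Δ_k² ≤ log(2K) · H₂, where H₂ := max_{2≤k≤K} (∑_{j=1}^k d_{(j)})/Δ_k². -/
open Finset Real

/-! With `S k = ∑_{j ≤ k} d j` and `H = max_{2 ≤ k ≤ K} S k / Δ k ^ 2`, monotonicity of `d` gives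
`d k ≤ S k / k`, so the `k`-th term of `H₁` is at most `H / k` for `k ≥ 3`, while the first two
terms together are `S 2 / Δ 2 ^ 2 ≤ H`. Hence `H₁ ≤ (1 + ∑_{k=3}^K 1/k) H = (harmonic K - 1/2) H`,
and `harmonic K ≤ 1 + log K < 1/2 + log (2K)`. -/

lemma sum_Icc_eq_add_sum_Icc_add_one {M : Type*} [AddCommMonoid M] (f : ℕ → M) {a b : ℕ}
    (h : a ≤ b) : ∑ k ∈ Icc a b, f k = f a + ∑ k ∈ Icc (a + 1) b, f k := by
  rw [← insert_Icc_add_one_left_eq_Icc h, sum_insert (by simp)]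

lemma le_sum_Icc_div_of_le {d : ℕ → ℝ} {k : ℕ} (hk : 0 < k) (hd : ∀ j ∈ Icc 1 k, d k ≤ d j) :
    d k ≤ (∑ j ∈ Icc 1 k, d j) / k := by
  have := card_nsmul_le_sum (Icc 1 k) d (d k) hd
  rw [Nat.card_Icc, Nat.add_sub_cancel, nsmul_eq_mul] at this
  rw [le_div_iff₀ (by exact_mod_cast hk)]
  linarith

lemma div_le_inv_mul_of_sum_Icc_div_le {d : ℕ → ℝ} {k : ℕ} {c H : ℝ} (hk : 0 < k) (hc : 0 ≤ c)
    (hd : ∀ j ∈ Icc 1 k, d k ≤ d j) (hH : (∑ j ∈ Icc 1 k, d j) / c ≤ H) :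
    d k / c ≤ (k : ℝ)⁻¹ * H :=
  calc d k / c ≤ (∑ j ∈ Icc 1 k, d j) / k / c := by gcongr; exact le_sum_Icc_div_of_le hk hd
    _ = (k : ℝ)⁻¹ * ((∑ j ∈ Icc 1 k, d j) / c) := by ring
    _ ≤ (k : ℝ)⁻¹ * H := by gcongr

lemma one_add_sum_Icc_three_inv_le_log_two_mul {K : ℕ} (hK : 2 ≤ K) :
    1 + ∑ k ∈ Icc 3 K, (k : ℝ)⁻¹ ≤ log (2 * K) := by
  have hharmonic : (harmonic K : ℝ) = 1 + 2⁻¹ + ∑ k ∈ Icc 3 K, (k : ℝ)⁻¹ := by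
    rw [harmonic_eq_sum_Icc, Rat.cast_sum, sum_Icc_eq_add_sum_Icc_add_one _ (by omega),
      sum_Icc_eq_add_sum_Icc_add_one _ (by omega)]
    push_cast
    ring
  have hK0 : (K : ℝ) ≠ 0 := by positivity
  rw [log_mul two_ne_zero hK0]
  linarith [harmonic_le_one_add_log K, log_two_gt_d9]

theorem H1_le_log_H2 (K : ℕ) (hK : 2 ≤ K) (Δ d : ℕ → ℝ)
    (hdpos : ∀ k ∈ Finset.Icc 1 K, 0 < d k)
    (hdmono : ∀ k ∈ Finset.Icc 1 K, ∀ j ∈ Finset.Icc 1 K, j ≤ k → d k ≤ d j) :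
    d 1 / (Δ 2) ^ 2 + ∑ k ∈ Finset.Icc 2 K, d k / (Δ k) ^ 2
      ≤ Real.log (2 * K) *
        ((Finset.Icc 2 K).sup' (by simp; omega)
          (fun k => (∑ j ∈ Finset.Icc 1 k, d j) / (Δ k) ^ 2)) := by
  set H := (Finset.Icc 2 K).sup' _ (fun k => (∑ j ∈ Finset.Icc 1 k, d j) / (Δ k) ^ 2)
  have hS : ∀ k ∈ Icc 2 K, (∑ j ∈ Icc 1 k, d j) / Δ k ^ 2 ≤ H := fun k hk =>
    le_sup' (fun k => (∑ j ∈ Icc 1 k, d j) / Δ k ^ 2) hk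
  have h2 : 2 ∈ Icc 2 K := by simp [hK]
  have hH : 0 ≤ H := (div_nonneg (sum_nonneg fun j hj => (hdpos j (by simp at hj ⊢; omega)).le)
    (sq_nonneg _)).trans (hS 2 h2)
  have htail : ∀ k ∈ Icc 3 K, d k / Δ k ^ 2 ≤ (k : ℝ)⁻¹ * H := fun k hk => by
    simp only [mem_Icc] at hk
    exact div_le_inv_mul_of_sum_Icc_div_le (by omega) (sq_nonneg _)
      (fun j hj => hdmono k (by simp; omega) j (by simp at hj ⊢; omega) (by simp at hj; omega))
      (hS k (by simp; omega))
  calc d 1 / Δ 2 ^ 2 + ∑ k ∈ Icc 2 K, d k / Δ k ^ 2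
      = (∑ j ∈ Icc 1 2, d j) / Δ 2 ^ 2 + ∑ k ∈ Icc 3 K, d k / Δ k ^ 2 := by
        rw [sum_Icc_eq_add_sum_Icc_add_one _ (by omega : 2 ≤ K), sum_Icc_eq_add_sum_Icc_add_one _
          (by omega : 1 ≤ 2), Icc_self, sum_singleton]
        ring
    _ ≤ H + ∑ k ∈ Icc 3 K, (k : ℝ)⁻¹ * H := add_le_add (hS 2 h2) (sum_le_sum htail)
    _ = (1 + ∑ k ∈ Icc 3 K, (k : ℝ)⁻¹) * H := by rw [← sum_mul]; ring
    _ ≤ log (2 * K) * H :=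
        mul_le_mul_of_nonneg_right (one_add_sum_Icc_three_inv_le_log_two_mul hK) hH
end

section
/- For the specific instance with K arms, r_1 = 1/2, r_k = 1/2 − 2^{(k−K−4)/2} for k ≥ 2, and d_1 = 2^{-(K-2)}, d_k = 2^{-(K-k)} for k ≥ 2: the complexity terms satisfy H̃₁ := d_1/(r_1−r_2)² + ∑_{k=2}^K d_k/(r_1−r_k)² = 16K, and H̃₂ := max_{2≤k≤K} (∑_{j=1}^k d_j)/(r_1−r_k)² = 32. -/
/-!
Every gap satisfies `(r 1 - r k)² = 2^(k-K-4)`, so each term `d k / (r 1 - r k)²` equals `2^4 = 16`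
(the first one too, since `d 1 = d 2`); this gives `H̃₁ = 16 K`. The weights double from `k = 2` on
and `d 1 = d 2`, so every prefix sum is `∑_{j ≤ k} d j = 2 d k`, and every term of `H̃₂` is `32`.
-/

open Finset Real

theorem sum_Icc_one_eq_two_mul_of_doubling {R : Type*} [Semiring R] {d : ℕ → R} {k : ℕ}
    (h12 : d 1 = d 2) (hdouble : ∀ j, 2 ≤ j → j < k → d (j + 1) = 2 * d j) (hk : 2 ≤ k) :
    ∑ j ∈ Icc 1 k, d j = 2 * d k := by
  induction k, hk using Nat.le_induction with
  | base => simp [sum_Icc_succ_top, h12, two_mul]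
  | succ n hn ih =>
    rw [sum_Icc_succ_top (by omega), ih fun j hj hjn => hdouble j hj (by omega),
      hdouble n hn (by omega), two_mul (2 * d n)]

theorem two_rpow_div_two_sq (x : ℝ) : ((2 : ℝ) ^ (x / 2)) ^ 2 = 2 ^ x := by
  rw [← rpow_natCast, ← rpow_mul zero_le_two]
  ring_nf

section HardInstance

variable {K : ℕ} {r d : ℕ → ℝ}

theorem gap_sq_eq (hr1 : r 1 = 1 / 2)
    (hrk : ∀ k ∈ Icc 2 K, r k = 1 / 2 - (2:ℝ) ^ ((((k:ℝ) - K - 4)) / 2))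
    {k : ℕ} (hk : k ∈ Icc 2 K) : (r 1 - r k) ^ 2 = (2:ℝ) ^ ((k:ℝ) - K - 4) := by
  rw [hr1, hrk k hk, sub_sub_cancel, two_rpow_div_two_sq]

theorem weight_div_gap_sq_eq_sixteen (hr1 : r 1 = 1 / 2)
    (hrk : ∀ k ∈ Icc 2 K, r k = 1 / 2 - (2:ℝ) ^ ((((k:ℝ) - K - 4)) / 2))
    (hdk : ∀ k ∈ Icc 2 K, d k = (2:ℝ) ^ (-((K:ℝ) - (k:ℝ))))
    {k : ℕ} (hk : k ∈ Icc 2 K) : d k / (r 1 - r k) ^ 2 = 16 := by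
  rw [hdk k hk, gap_sq_eq hr1 hrk hk, ← rpow_sub zero_lt_two,
    show -((K:ℝ) - k) - (k - K - 4) = (4 : ℕ) by push_cast; ring, rpow_natCast]
  norm_num

theorem weight_succ_eq_two_mul (hdk : ∀ k ∈ Icc 2 K, d k = (2:ℝ) ^ (-((K:ℝ) - (k:ℝ))))
    {j : ℕ} (hj : 2 ≤ j) (hjK : j < K) : d (j + 1) = 2 * d j := by
  rw [hdk (j + 1) (mem_Icc.2 ⟨by omega, hjK⟩), hdk j (mem_Icc.2 ⟨hj, hjK.le⟩),
    show -((K:ℝ) - ((j + 1 : ℕ) : ℝ)) = -((K:ℝ) - j) + 1 by push_cast; ring,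
    rpow_add_one two_ne_zero]
  ring

end HardInstance

theorem hard_instance_complexity (K : ℕ) (hK : 2 ≤ K) (r d : ℕ → ℝ)
    (hr1 : r 1 = 1 / 2)
    (hrk : ∀ k ∈ Finset.Icc 2 K, r k = 1 / 2 - (2:ℝ) ^ ((((k:ℝ) - K - 4)) / 2))
    (hd1 : d 1 = (2:ℝ) ^ (-((K:ℝ) - 2)))
    (hdk : ∀ k ∈ Finset.Icc 2 K, d k = (2:ℝ) ^ (-((K:ℝ) - (k:ℝ)))) :
    d 1 / (r 1 - r 2) ^ 2 + ∑ k ∈ Finset.Icc 2 K, d k / (r 1 - r k) ^ 2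
        = 16 * K ∧
    (Finset.Icc 2 K).sup' (by simp; omega)
        (fun k => (∑ j ∈ Finset.Icc 1 k, d j) / (r 1 - r k) ^ 2) = 32 := by
  have h2K : 2 ∈ Icc 2 K := mem_Icc.2 ⟨le_rfl, hK⟩
  have h12 : d 1 = d 2 := by rw [hd1, hdk 2 h2K]; norm_num
  have hterm := fun k (hk : k ∈ Icc 2 K) => weight_div_gap_sq_eq_sixteen hr1 hrk hdk hk
  constructor
  · rw [h12, hterm 2 h2K, sum_congr rfl hterm, sum_const, Nat.card_Icc, nsmul_eq_mul,
      Nat.cast_sub (by omega)]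
    push_cast
    ring
  · have hprefix : ∀ k ∈ Icc 2 K, (∑ j ∈ Icc 1 k, d j) / (r 1 - r k) ^ 2 = 32 := by
      intro k hk
      have hkK := (mem_Icc.1 hk).2
      rw [sum_Icc_one_eq_two_mul_of_doubling h12
          (fun j hj hjk => weight_succ_eq_two_mul hdk hj (by omega)) (mem_Icc.1 hk).1,
        mul_div_assoc, hterm k hk]
      norm_num
    rw [sup'_congr _ rfl hprefix, sup'_const]
end
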